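/- arXiv:2108.10502 — 8 statements merged into one kernel-verified Lean document; each statement's English description precedes it below -/
import Mathlib

section
/- Let φ: ℤ → ℤ be defined by φ(k) = β(k - k₀)² for a positive integer β and integer k₀. Then the integral conjugate φ•(ℓ) = max{kℓ - φ(k) : k ∈ ℤ} equals k₀ℓ + ⌊(ℓ+β)/(2β)⌋·(ℓ - β⌊(ℓ+β)/(2β)⌋) for every integer ℓ; in particular, this maximum is always finite and attained. -/
/-- **Integral conjugate of a quadratic univariate function.**
For φ(k) = β(k − k₀)² with β > 0, the integral conjugate
φ•(ℓ) = max{kℓ − φ(k) : k ∈ ℤ} equals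
k₀ℓ + ⌊(ℓ+β)/(2β)⌋·(ℓ − β⌊(ℓ+β)/(2β)⌋), the maximum being attained. -/
theorem conjugate_quadratic_function (β k₀ : ℤ) (hβ : 0 < β) (φ : ℤ → ℤ)
    (hφ : ∀ k, φ k = β * (k - k₀) ^ 2) (ℓ : ℤ) :
    IsGreatest {v : ℤ | ∃ k : ℤ, v = k * ℓ - φ k}
      (k₀ * ℓ + ⌊((ℓ + β : ℤ) : ℚ) / ((2 * β : ℤ) : ℚ)⌋ *
        (ℓ - β * ⌊((ℓ + β : ℤ) : ℚ) / ((2 * β : ℤ) : ℚ)⌋)) := by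
  set q : ℤ := ⌊((ℓ + β : ℤ) : ℚ) / ((2 * β : ℤ) : ℚ)⌋ with hqdef
  have h2β : (0 : ℚ) < ((2 * β : ℤ) : ℚ) := by exact_mod_cast (by linarith : (0:ℤ) < 2 * β)
  have h1 : (q : ℚ) ≤ ((ℓ + β : ℤ) : ℚ) / ((2 * β : ℤ) : ℚ) := Int.floor_le _
  have h2 : ((ℓ + β : ℤ) : ℚ) / ((2 * β : ℤ) : ℚ) < q + 1 := Int.lt_floor_add_one _
  have hq1 : β * (2 * q - 1) ≤ ℓ := by
    have h := (le_div_iff₀ h2β).mp h1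
    have : (β * (2 * q - 1) : ℚ) ≤ (ℓ : ℚ) := by push_cast at h ⊢; nlinarith
    exact_mod_cast this
  have hq2 : ℓ < β * (2 * q + 1) := by
    have h' := (div_lt_iff₀ h2β).mp h2
    have : (ℓ : ℚ) < (β * (2 * q + 1) : ℚ) := by push_cast at h' ⊢; nlinarith
    exact_mod_cast this
  constructor
  · exact ⟨k₀ + q, by rw [hφ]; ring⟩
  · rintro v ⟨k, rfl⟩
    rw [hφ]
    rcases lt_trichotomy (k - k₀) q with h | h | h
    · have hB : 0 ≤ ℓ - β * (q + (k - k₀)) := by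
        have : 0 ≤ β * (q - (k - k₀) - 1) := mul_nonneg hβ.le (by omega)
        linarith
      nlinarith [mul_nonneg (by omega : (0:ℤ) ≤ q - (k - k₀)) hB]
    · have : k = k₀ + q := by omega
      subst this; nlinarith
    · have hB : 0 ≤ β * (q + (k - k₀)) - ℓ := by
        have : 0 ≤ β * ((k - k₀) - q - 1) := mul_nonneg hβ.le (by omega)
        linarith
      nlinarith [mul_nonneg (by omega : (0:ℤ) ≤ (k - k₀) - q) hB]
end

section
/- A symmetric n×n real matrix Q = (q_{ij}) is called diagonally dominant with nonnegative diagonals if q_{ii} ≥ Σ_{j≠i} |q_{ij}| for all i. If Q is diagonally dominant with nonnegative diagonals, then the function f(x) = xᵀQx on ℤⁿ is integrally convex. -/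
/-! Move the integer points x and y towards each other by half their distance, rounded towards
zero. This gives points z, w of the integral neighbourhood of (x + y)/2 with z + w = x + y and
z - w = s, the residue of d = x - y modulo 2 taken with the sign of d. By the parallelogram law,
f z + f w ≤ f x + f y reduces to sᵀQs ≤ dᵀQd. Diagonal dominance writes vᵀQv as a nonnegative
combination of the squares vᵢ² and (vᵢ ± vⱼ)², and each of these is no larger for s than for d,
since |sᵢ ± sⱼ| ≤ |dᵢ ± dⱼ|. -/

open scoped BigOperators

/-- The integral neighborhood N(u) = {z ∈ ℤⁿ : |uᵢ − zᵢ| < 1 for all i}. -/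
def intNbhd {n : ℕ} (u : Fin n → ℝ) : Set (Fin n → ℤ) :=
  {z | ∀ i, |u i - (z i : ℝ)| < 1}

/-- The local convex extension f̃(u): the infimum of convex combinations
Σ λ_z f(z) over points z of the integral neighborhood N(u) whose convex
combination with the weights λ equals u.  (It is +∞ when no such
combination exists.) -/
noncomputable def localConvexExt {n : ℕ} (f : (Fin n → ℤ) → EReal)
    (u : Fin n → ℝ) : EReal :=
  sInf { v : EReal | ∃ (t : Finset (Fin n → ℤ)) (lam : (Fin n → ℤ) → ℝ),
    (∀ z ∈ t, z ∈ intNbhd u) ∧ (∀ z ∈ t, 0 ≤ lam z) ∧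
    (∑ z ∈ t, lam z) = 1 ∧
    (∀ i, (∑ z ∈ t, lam z * (z i : ℝ)) = u i) ∧
    v = ∑ z ∈ t, (((lam z : ℝ) : EReal) * f z) }

/-- A function f : ℤⁿ → ℝ ∪ {+∞} with nonempty effective domain is
*integrally convex* if its local convex extension satisfies the midpoint
inequality f̃((x+y)/2) ≤ (f(x)+f(y))/2 for all x, y ∈ ℤⁿ with
‖x − y‖∞ ≥ 2 (this is equivalent to convexity of f̃ on ℝⁿ). -/
def IntegrallyConvexFn {n : ℕ} (f : (Fin n → ℤ) → EReal) : Prop :=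
  (∃ x, f x ≠ ⊤) ∧
  ∀ x y : Fin n → ℤ, (∃ i, 2 ≤ |x i - y i|) →
    localConvexExt f (fun i => ((x i + y i : ℤ) : ℝ) / 2) ≤ (f x + f y) / 2

open Finset

section QuadForm

variable {ι : Type*} [Fintype ι]

noncomputable def quadForm (Q : Matrix ι ι ℝ) (v : ι → ℝ) : ℝ :=
  ∑ i, ∑ j, v i * Q i j * v j

theorem quadForm_add_add_quadForm_sub (Q : Matrix ι ι ℝ) (v w : ι → ℝ) :
    quadForm Q (v + w) + quadForm Q (v - w) = 2 * quadForm Q v + 2 * quadForm Q w := by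
  simp only [quadForm, Pi.add_apply, Pi.sub_apply, mul_sum, ← sum_add_distrib]
  exact sum_congr rfl fun i _ => sum_congr rfl fun j _ => by ring

theorem sum_sum_erase_nonneg [DecidableEq ι] {g : ι → ι → ℝ}
    (hg : ∀ i j, i ≠ j → 0 ≤ g i j + g j i) : 0 ≤ ∑ i, ∑ j ∈ univ.erase i, g i j := by
  have hswap : ∑ i, ∑ j ∈ univ.erase i, g j i = ∑ i, ∑ j ∈ univ.erase i, g i j :=
    sum_comm' fun i j => by simp [ne_comm]
  have : 0 ≤ ∑ i, ∑ j ∈ univ.erase i, (g i j + g j i) :=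
    sum_nonneg fun i _ => sum_nonneg fun j hj => hg i j (ne_of_mem_erase hj).symm
  simp only [sum_add_distrib, hswap] at this
  linarith

theorem neg_abs_mul_le_two_mul_mul_sub (q : ℝ) {a₁ a₂ b₁ b₂ : ℝ}
    (hadd : |b₁ + b₂| ≤ |a₁ + a₂|) (hsub : |b₁ - b₂| ≤ |a₁ - a₂|) :
    -(|q| * (a₁ ^ 2 - b₁ ^ 2 + (a₂ ^ 2 - b₂ ^ 2))) ≤ 2 * q * (a₁ * a₂ - b₁ * b₂) := by
  rw [← sq_le_sq] at hadd hsub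
  rcases le_total 0 q with hq | hq
  · rw [abs_of_nonneg hq]; nlinarith
  · rw [abs_of_nonpos hq]; nlinarith

theorem quadForm_le_quadForm_of_diagDominant [DecidableEq ι] {Q : Matrix ι ι ℝ}
    (hsymm : Q.IsSymm) (hdd : ∀ i, ∑ j ∈ univ.erase i, |Q i j| ≤ Q i i) {a b : ι → ℝ}
    (hadd : ∀ i j, |b i + b j| ≤ |a i + a j|) (hsub : ∀ i j, |b i - b j| ≤ |a i - a j|) :
    quadForm Q b ≤ quadForm Q a := by
  set d : ι → ℝ := fun i => a i ^ 2 - b i ^ 2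
  set e : ι → ι → ℝ := fun i j => a i * a j - b i * b j
  have hd : ∀ i, 0 ≤ d i := fun i => by
    have := sq_le_sq.mpr (hadd i i)
    simp only [d]; nlinarith
  have hrow : ∀ i, ∑ j ∈ univ.erase i, (|Q i j| * d i + Q i j * e i j) ≤ ∑ j, Q i j * e i j := by
    intro i
    rw [← add_sum_erase _ _ (mem_univ i), sum_add_distrib, ← sum_mul]
    have hdiag : e i i = d i := by simp only [d, e]; ring
    rw [hdiag]
    gcongr
    exacts [hd i, hdd i]
  have hpairs : 0 ≤ ∑ i, ∑ j ∈ univ.erase i, (|Q i j| * d i + Q i j * e i j) := by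
    refine sum_sum_erase_nonneg fun i j _ => ?_
    have := neg_abs_mul_le_two_mul_mul_sub (Q i j) (hadd i j) (hsub i j)
    rw [hsymm.apply i j]
    simp only [d, e]
    nlinarith
  have hdiff : quadForm Q a - quadForm Q b = ∑ i, ∑ j, Q i j * e i j := by
    simp only [quadForm, e, ← sum_sub_distrib]
    exact sum_congr rfl fun i _ => sum_congr rfl fun j _ => by ring
  linarith [sum_le_sum fun i (_ : i ∈ univ) => hrow i]

theorem quadForm_add_quadForm_le_of_diagDominant [DecidableEq ι] {Q : Matrix ι ι ℝ}
    (hsymm : Q.IsSymm) (hdd : ∀ i, ∑ j ∈ univ.erase i, |Q i j| ≤ Q i i) {x y z w : ι → ℝ}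
    (hsum : z + w = x + y) (hadd : ∀ i j, |z i - w i + (z j - w j)| ≤ |x i - y i + (x j - y j)|)
    (hsub : ∀ i j, |z i - w i - (z j - w j)| ≤ |x i - y i - (x j - y j)|) :
    quadForm Q z + quadForm Q w ≤ quadForm Q x + quadForm Q y := by
  have hmono : quadForm Q (z - w) ≤ quadForm Q (x - y) :=
    quadForm_le_quadForm_of_diagDominant hsymm hdd hadd hsub
  have hzw := quadForm_add_add_quadForm_sub Q z w
  rw [hsum] at hzw
  linarith [quadForm_add_add_quadForm_sub Q x y]

end QuadForm

theorem abs_tmod_two_le_one (m : ℤ) : |m.tmod 2| ≤ 1 := by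
  simp only [Int.tmod_eq_emod, abs_eq_max_neg, max_def]; split_ifs <;> omega

theorem abs_tmod_two_add_tmod_two_le (m k : ℤ) : |m.tmod 2 + k.tmod 2| ≤ |m + k| := by
  simp only [Int.tmod_eq_emod, abs_eq_max_neg, max_def]; split_ifs <;> omega

theorem abs_tmod_two_sub_tmod_two_le (m k : ℤ) : |m.tmod 2 - k.tmod 2| ≤ |m - k| := by
  simpa [sub_eq_add_neg, Int.neg_tmod] using abs_tmod_two_add_tmod_two_le m (-k)

theorem localConvexExt_le_of_abs_sub_le_one {n : ℕ} (f : (Fin n → ℤ) → ℝ) {u : Fin n → ℝ}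
    {z w : Fin n → ℤ} (hu : ∀ i, (z i : ℝ) + w i = 2 * u i) (hzw : ∀ i, |z i - w i| ≤ 1) :
    localConvexExt (fun v => (f v : EReal)) u ≤ ((f z + f w) / 2 : ℝ) := by
  have hclose : ∀ i, |u i - z i| < 1 ∧ |u i - w i| < 1 := fun i => by
    have h := abs_le.mp (show |(z i : ℝ) - w i| ≤ 1 by exact_mod_cast hzw i)
    have := hu i
    exact ⟨abs_lt.mpr ⟨by linarith, by linarith⟩, abs_lt.mpr ⟨by linarith, by linarith⟩⟩
  have hnbhd : ∀ v ∈ ({z, w} : Finset _), v ∈ intNbhd u := by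
    intro v hv i
    rcases mem_insert.mp hv with rfl | hv
    · exact (hclose i).1
    · exact mem_singleton.mp hv ▸ (hclose i).2
  rcases eq_or_ne z w with rfl | hne
  · refine sInf_le ⟨{z}, fun _ => 1, by simpa using hnbhd, by simp, by simp, fun i => ?_, ?_⟩
    · simp only [one_mul, sum_singleton]; linarith [hu i]
    · simp
  · refine sInf_le ⟨{z, w}, fun _ => 1 / 2, hnbhd, by norm_num, by rw [sum_pair hne]; norm_num,
      fun i => ?_, ?_⟩
    · rw [sum_pair hne]; linarith [hu i]
    · rw [sum_pair hne, ← EReal.coe_mul, ← EReal.coe_mul, ← EReal.coe_add]; ring_nf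

/-- **Diagonally dominant quadratics are integrally convex.**
If a symmetric real matrix Q satisfies qᵢᵢ ≥ Σ_{j≠i} |qᵢⱼ| for all i,
then f(x) = xᵀQx is integrally convex on ℤⁿ. -/
theorem diagonally_dominant_quadratic_integrally_convex (n : ℕ)
    (Q : Matrix (Fin n) (Fin n) ℝ) (hsymm : Q.IsSymm)
    (hdd : ∀ i, (∑ j ∈ Finset.univ.erase i, |Q i j|) ≤ Q i i) :
    IntegrallyConvexFn (fun x : Fin n → ℤ =>
      (((∑ i, ∑ j, (x i : ℝ) * Q i j * (x j : ℝ)) : ℝ) : EReal)) := by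
  refine ⟨⟨0, EReal.coe_ne_top _⟩, fun x y _ => ?_⟩
  set q : Fin n → ℤ := fun i => (x i - y i).tdiv 2
  have hres : ∀ i, x i - q i - (y i + q i) = (x i - y i).tmod 2 := fun i => by
    rw [Int.tmod_def]; ring
  calc localConvexExt _ _
      ≤ ((quadForm Q (fun i => ((x i - q i : ℤ) : ℝ))
          + quadForm Q (fun i => ((y i + q i : ℤ) : ℝ))) / 2 : ℝ) :=
        localConvexExt_le_of_abs_sub_le_one (fun v => quadForm Q (fun i => (v i : ℝ)))
          (fun i => by push_cast; ring) (fun i => hres i ▸ abs_tmod_two_le_one _)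
    _ ≤ ((quadForm Q (fun i => (x i : ℝ)) + quadForm Q (fun i => (y i : ℝ))) / 2 : ℝ) := by
        refine EReal.coe_le_coe_iff.mpr (div_le_div_of_nonneg_right ?_ zero_le_two)
        refine quadForm_add_quadForm_le_of_diagDominant hsymm hdd
          (funext fun i => by simp only [Pi.add_apply]; push_cast; ring)
          (fun i j => ?_) (fun i j => ?_)
        · exact_mod_cast hres i ▸ hres j ▸ abs_tmod_two_add_tmod_two_le (x i - y i) (x j - y j)
        · exact_mod_cast hres i ▸ hres j ▸ abs_tmod_two_sub_tmod_two_le (x i - y i) (x j - y j)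
    _ = _ := by rw [EReal.coe_div, EReal.coe_add]; rfl
end

section
/- Local optimality implies global optimality for integrally convex functions: if f: ℤⁿ → ℝ ∪ {+∞} is integrally convex and x* ∈ dom f satisfies f(x*) ≤ f(x* + d) for all d ∈ {-1,0,+1}ⁿ, then f(x*) ≤ f(x) for all x ∈ ℤⁿ. -/
open scoped BigOperators

lemma ereal_coe_sum' {α : Type*} (t : Finset α) (g : α → ℝ) :
    ((∑ z ∈ t, g z : ℝ) : EReal) = ∑ z ∈ t, ((g z : ℝ) : EReal) := by
  induction t using Finset.cons_induction with
  | empty => simp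
  | cons a s ha ih => simp [Finset.sum_cons, EReal.coe_add, ih]

/-- **Local optimality implies global optimality for integrally convex
functions.**  If f : ℤⁿ → ℝ ∪ {+∞} is integrally convex, x* ∈ dom f, and
f(x*) ≤ f(x* + d) for all d ∈ {−1,0,+1}ⁿ, then x* is a global minimizer. -/
theorem integrally_convex_local_to_global (n : ℕ)
    (f : (Fin n → ℤ) → EReal) (hnb : ∀ x, f x ≠ ⊥)
    (hf : IntegrallyConvexFn f) (xs : Fin n → ℤ) (hxs : f xs ≠ ⊤)
    (hloc : ∀ d : Fin n → ℤ, (∀ i, d i = -1 ∨ d i = 0 ∨ d i = 1) →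
      f xs ≤ f (xs + d)) :
    ∀ x : Fin n → ℤ, f xs ≤ f x := by
  obtain ⟨-, hmid⟩ := hf
  obtain ⟨r, hr⟩ : ∃ r : ℝ, f xs = (r : EReal) :=
    ⟨(f xs).toReal, (EReal.coe_toReal hxs (hnb xs)).symm⟩
  suffices key : ∀ m : ℕ, ∀ x : Fin n → ℤ, (∀ i, |x i - xs i| ≤ (m : ℤ)) → f xs ≤ f x by
    intro x
    refine key (∑ i, (x i - xs i).natAbs) x (fun i => ?_)
    have h1 : (x i - xs i).natAbs ≤ ∑ j, (x j - xs j).natAbs :=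
      Finset.single_le_sum (f := fun j => (x j - xs j).natAbs)
        (fun j _ => Nat.zero_le _) (Finset.mem_univ i)
    have h2 : |x i - xs i| = ((x i - xs i).natAbs : ℤ) := Int.abs_eq_natAbs _
    rw [h2]
    exact_mod_cast h1
  intro m
  induction m using Nat.strong_induction_on with
  | _ m IH =>
    intro x hx
    by_cases hbig : ∃ i, 2 ≤ |x i - xs i|
    · -- there is a far coordinate: use the midpoint inequality
      obtain ⟨i0, hi0⟩ := hbig
      have hm2 : 2 ≤ m := by
        have h1 := hx i0
        have : (2 : ℤ) ≤ (m : ℤ) := le_trans hi0 h1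
        exact_mod_cast this
      have hmid' := hmid x xs ⟨i0, hi0⟩
      -- every point of the integral neighborhood of the midpoint satisfies f xs ≤ f z
      have hz : ∀ z : Fin n → ℤ,
          z ∈ intNbhd (fun i => ((x i + xs i : ℤ) : ℝ) / 2) → f xs ≤ f z := by
        intro z hzmem
        refine IH (m - 1) (by omega) z (fun i => ?_)
        have h1 : |((x i + xs i : ℤ) : ℝ) / 2 - (z i : ℝ)| < 1 := hzmem i
        rw [abs_lt] at h1
        push_cast at h1
        have h2 : |((x i - xs i : ℤ) : ℝ)| ≤ (m : ℝ) := by exact_mod_cast hx i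
        rw [abs_le] at h2
        push_cast at h2
        have hm2r : (2 : ℝ) ≤ (m : ℝ) := by exact_mod_cast hm2
        have hzr : |((z i - xs i : ℤ) : ℝ)| < (m : ℝ) := by
          rw [abs_lt]
          push_cast
          constructor <;> linarith [h1.1, h1.2, h2.1, h2.2]
        have hzi : |z i - xs i| < (m : ℤ) := by exact_mod_cast hzr
        have hc : ((m - 1 : ℕ) : ℤ) = (m : ℤ) - 1 := by omega
        rw [hc]
        exact Int.le_sub_one_iff.mpr hzi
      -- lower bound for the local convex extension
      have hlow : f xs ≤ localConvexExt f (fun i => ((x i + xs i : ℤ) : ℝ) / 2) := by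
        refine le_sInf ?_
        rintro v ⟨t, lam, hN, hpos, hsum, -, rfl⟩
        calc f xs = ((r : ℝ) : EReal) := hr
          _ = ((∑ z ∈ t, lam z * r : ℝ) : EReal) := by
              rw [← Finset.sum_mul, hsum, one_mul]
          _ = ∑ z ∈ t, ((lam z : EReal) * ((r : ℝ) : EReal)) := by
              rw [ereal_coe_sum']
              exact Finset.sum_congr rfl fun z _ => EReal.coe_mul _ _
          _ ≤ ∑ z ∈ t, ((lam z : EReal) * f z) := by
              refine Finset.sum_le_sum fun z hzt => ?_
              refine mul_le_mul_of_nonneg_left ?_ ?_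
              · rw [← hr]; exact hz z (hN z hzt)
              · exact_mod_cast hpos z hzt
      have hmain : f xs ≤ (f x + f xs) / 2 := hlow.trans hmid'
      by_cases hxt : f x = ⊤
      · rw [hxt]; exact le_top
      obtain ⟨s, hs⟩ : ∃ s : ℝ, f x = (s : EReal) :=
        ⟨(f x).toReal, (EReal.coe_toReal hxt (hnb x)).symm⟩
      rw [hr, hs] at hmain
      have hco : ((s : EReal) + (r : EReal)) / 2 = (((s + r) / 2 : ℝ) : EReal) := by
        rw [EReal.coe_div, EReal.coe_add]
        norm_cast
      rw [hco, EReal.coe_le_coe_iff] at hmain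
      rw [hr, hs, EReal.coe_le_coe_iff]
      linarith
    · -- all coordinates within 1: local optimality applies directly
      push_neg at hbig
      have h := hloc (x - xs) (fun i => by
        have h1 : |x i - xs i| < 2 := hbig i
        rw [abs_lt] at h1
        have : (x - xs) i = x i - xs i := rfl
        omega)
      simpa using h
end

section
/- Intersection of an integrally convex set with an integer box: if S ⊆ ℤⁿ is an integrally convex set and D = {x ∈ ℤⁿ : α ≤ x ≤ β} for α ∈ (ℤ ∪ {-∞})ⁿ, β ∈ (ℤ ∪ {+∞})ⁿ with α ≤ β, then the convex hull of S ∩ D equals the intersection of the convex hull of S with the convex hull of D. -/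
open scoped BigOperators

/-- Coercion of an integer point to a real point. -/
def castR {n : ℕ} (z : Fin n → ℤ) : Fin n → ℝ := fun i => (z i : ℝ)

/-- A nonempty S ⊆ ℤⁿ is *integrally convex* if every real point of its
convex hull lies in the convex hull of S ∩ N(u). -/
def IntegrallyConvexSet {n : ℕ} (S : Set (Fin n → ℤ)) : Prop :=
  S.Nonempty ∧ ∀ u : Fin n → ℝ, u ∈ convexHull ℝ (castR '' S) →
    u ∈ convexHull ℝ (castR '' (S ∩ intNbhd u))

/-! A point u of conv(S) ∩ conv(D) lies in the real box with the bounds of D. Integral convexity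
writes u as a convex combination of points of S at distance less than one from u in every
coordinate, and since the bounds are integers or infinite, such points cannot leave D. -/

open Set

section Box

variable {n : ℕ} (α β : Fin n → EReal)

def intBox : Set (Fin n → ℤ) :=
  {x | ∀ i, α i ≤ ((x i : ℝ) : EReal) ∧ ((x i : ℝ) : EReal) ≤ β i}

def realBox : Set (Fin n → ℝ) :=
  {u | ∀ i, α i ≤ ((u i : ℝ) : EReal) ∧ ((u i : ℝ) : EReal) ≤ β i}

lemma ordConnected_ereal_preimage_Icc (a b : EReal) :
    OrdConnected {x : ℝ | a ≤ (x : EReal) ∧ (x : EReal) ≤ b} :=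
  ⟨fun _ hx _ hy _ hz =>
    ⟨hx.1.trans (EReal.coe_le_coe_iff.2 hz.1), (EReal.coe_le_coe_iff.2 hz.2).trans hy.2⟩⟩

lemma convex_realBox : Convex ℝ (realBox α β) := by
  have : realBox α β = univ.pi fun i => {x : ℝ | α i ≤ (x : EReal) ∧ (x : EReal) ≤ β i} := by
    ext u; simp [realBox]
  rw [this]
  exact convex_pi fun i _ => (ordConnected_ereal_preimage_Icc (α i) (β i)).convex

lemma castR_image_intBox_subset : castR '' intBox α β ⊆ realBox α β := by
  rintro _ ⟨x, hx, rfl⟩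
  exact hx

lemma convexHull_intBox_subset : convexHull ℝ (castR '' intBox α β) ⊆ realBox α β :=
  convexHull_min (castR_image_intBox_subset α β) (convex_realBox α β)

end Box

lemma Int.le_of_intCast_le_of_abs_sub_lt_one {m z : ℤ} {u : ℝ} (hm : (m : ℝ) ≤ u)
    (hz : |u - z| < 1) : m ≤ z := by
  have : (m : ℝ) < z + 1 := by linarith [(abs_lt.1 hz).2]
  exact Int.lt_add_one_iff.1 (by exact_mod_cast this)

lemma Int.le_of_le_intCast_of_abs_sub_lt_one {m z : ℤ} {u : ℝ} (hm : u ≤ (m : ℝ))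
    (hz : |u - z| < 1) : z ≤ m := by
  have : (z : ℝ) < m + 1 := by linarith [(abs_lt.1 hz).1]
  exact Int.lt_add_one_iff.1 (by exact_mod_cast this)

lemma EReal.le_intCast_of_le_of_abs_sub_lt_one {a : EReal}
    (ha : a = ⊥ ∨ ∃ m : ℤ, a = ((m : ℝ) : EReal)) {u : ℝ} {z : ℤ} (hau : a ≤ (u : EReal))
    (hz : |u - z| < 1) : a ≤ ((z : ℝ) : EReal) := by
  rcases ha with rfl | ⟨m, rfl⟩
  · exact bot_le
  · exact EReal.coe_le_coe_iff.2 <| Int.cast_le.2 <|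
      Int.le_of_intCast_le_of_abs_sub_lt_one (EReal.coe_le_coe_iff.1 hau) hz

lemma EReal.intCast_le_of_le_of_abs_sub_lt_one {b : EReal}
    (hb : b = ⊤ ∨ ∃ m : ℤ, b = ((m : ℝ) : EReal)) {u : ℝ} {z : ℤ} (hub : (u : EReal) ≤ b)
    (hz : |u - z| < 1) : ((z : ℝ) : EReal) ≤ b := by
  rcases hb with rfl | ⟨m, rfl⟩
  · exact le_top
  · exact EReal.coe_le_coe_iff.2 <| Int.cast_le.2 <|
      Int.le_of_le_intCast_of_abs_sub_lt_one (EReal.coe_le_coe_iff.1 hub) hz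

lemma intNbhd_subset_intBox {n : ℕ} {α β : Fin n → EReal}
    (hα : ∀ i, α i = ⊥ ∨ ∃ m : ℤ, α i = ((m : ℝ) : EReal))
    (hβ : ∀ i, β i = ⊤ ∨ ∃ m : ℤ, β i = ((m : ℝ) : EReal))
    {u : Fin n → ℝ} (hu : u ∈ realBox α β) : intNbhd u ⊆ intBox α β := fun _ hz i =>
  ⟨EReal.le_intCast_of_le_of_abs_sub_lt_one (hα i) (hu i).1 (hz i),
    EReal.intCast_le_of_le_of_abs_sub_lt_one (hβ i) (hu i).2 (hz i)⟩

theorem convexHull_inter_box_general (n : ℕ) (S : Set (Fin n → ℤ))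
    (hS : IntegrallyConvexSet S) (α β : Fin n → EReal)
    (hα : ∀ i, α i = ⊥ ∨ ∃ m : ℤ, α i = ((m : ℝ) : EReal))
    (hβ : ∀ i, β i = ⊤ ∨ ∃ m : ℤ, β i = ((m : ℝ) : EReal)) :
    convexHull ℝ (castR ''
        (S ∩ {x : Fin n → ℤ | ∀ i, α i ≤ ((x i : ℝ) : EReal) ∧ ((x i : ℝ) : EReal) ≤ β i})) =
      convexHull ℝ (castR '' S) ∩
        convexHull ℝ (castR ''
          {x : Fin n → ℤ | ∀ i, α i ≤ ((x i : ℝ) : EReal) ∧ ((x i : ℝ) : EReal) ≤ β i}) := by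
  change convexHull ℝ (castR '' (S ∩ intBox α β)) =
    convexHull ℝ (castR '' S) ∩ convexHull ℝ (castR '' intBox α β)
  refine subset_antisymm
    (subset_inter (convexHull_mono (image_mono inter_subset_left))
      (convexHull_mono (image_mono inter_subset_right))) ?_
  rintro u ⟨huS, huD⟩
  have hu : u ∈ realBox α β := convexHull_intBox_subset α β huD
  exact convexHull_mono (image_mono (inter_subset_inter_right S (intNbhd_subset_intBox hα hβ hu)))
    (hS.2 u huS)

/-- **Intersection of an integrally convex set with an integer box.**
If S ⊆ ℤⁿ is integrally convex and D = {x ∈ ℤⁿ : α ≤ x ≤ β} is an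
integer box (entries of α in ℤ ∪ {−∞} and of β in ℤ ∪ {+∞}, α ≤ β),
then conv(S ∩ D) = conv(S) ∩ conv(D). -/
theorem convexHull_inter_box (n : ℕ) (S : Set (Fin n → ℤ))
    (hS : IntegrallyConvexSet S) (α β : Fin n → EReal)
    (hα : ∀ i, α i = ⊥ ∨ ∃ m : ℤ, α i = ((m : ℝ) : EReal))
    (hβ : ∀ i, β i = ⊤ ∨ ∃ m : ℤ, β i = ((m : ℝ) : EReal))
    (hαβ : ∀ i, α i ≤ β i) :
    convexHull ℝ (castR ''
        (S ∩ {x : Fin n → ℤ | ∀ i, α i ≤ ((x i : ℝ) : EReal) ∧ ((x i : ℝ) : EReal) ≤ β i})) =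
      convexHull ℝ (castR '' S) ∩
        convexHull ℝ (castR ''
          {x : Fin n → ℤ | ∀ i, α i ≤ ((x i : ℝ) : EReal) ∧ ((x i : ℝ) : EReal) ≤ β i}) :=
  convexHull_inter_box_general n S hS α β hα hβ
end

section
/- Box rounding of subgradients: let f: ℤⁿ → ℤ ∪ {+∞} be an integer-valued integrally convex function, x ∈ dom f, and p ∈ ℝⁿ a subgradient of f at x (i.e., f(y) - f(x) ≥ ⟨p, y-x⟩ for all y ∈ ℤⁿ). Then there exists an integer vector q ∈ ℤⁿ with ⌊pᵢ⌋ ≤ qᵢ ≤ ⌈pᵢ⌉ for all i such that q is also a subgradient of f at x. -/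
open scoped BigOperators

/-!
If an affine `ℓ` lies below `f` at the rounding points of `(X + Y) / 2`, it lies below the local
convex extension there, so the midpoint inequality gives `ℓ X + ℓ Y ≤ f X + f Y`. Since the
rounding points of `(x + y) / 2` are closer to `x` than `y` is, this shows that subgradient
inequalities at `x` need only be checked on the unit box around `x`.

There, `q` is found by Fourier–Motzkin elimination starting from the box `[⌊p⌋, ⌈p⌉]`, with the
invariant that every `y` near `x` is served by some `q` of the current box `[lo, hi]`, which may
depend on `y`. Fixing the coordinate `κ` to `t` bounds `t` above through the `y` with
`y κ = x κ + 1` and below through those with `y κ = x κ - 1`, all bounds being integers. A lower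
bound never exceeds an upper bound: for such `y, y'` the rounding points of `(y + y') / 2` have
`κ`-coordinate `x κ`, and the concave function `d ↦ min (lo i * d) (hi i * d)` is affine on the
rounding coordinates and lies below that affine function at `y i - x i` and `y' i - x i`.
-/

theorem EReal.coe_finset_sum {ι : Type*} (s : Finset ι) (g : ι → ℝ) :
    ((∑ i ∈ s, g i : ℝ) : EReal) = ∑ i ∈ s, (g i : EReal) :=
  map_sum (⟨⟨(↑), EReal.coe_zero⟩, EReal.coe_add⟩ : ℝ →+ EReal) g s

theorem exists_mem_Icc_between {α : Type*} [LinearOrder α] {a b : α} {L U : Set α}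
    (hU : U.Finite) (hab : a ≤ b) (haU : ∀ u ∈ U, a ≤ u) (hLb : ∀ l ∈ L, l ≤ b)
    (hLU : ∀ l ∈ L, ∀ u ∈ U, l ≤ u) :
    ∃ t, a ≤ t ∧ t ≤ b ∧ (∀ l ∈ L, l ≤ t) ∧ ∀ u ∈ U, t ≤ u := by
  classical
  let m := (insert b hU.toFinset).min' (Finset.insert_nonempty _ _)
  have hm : ∀ c, c ≤ m ↔ c ≤ b ∧ ∀ u ∈ U, c ≤ u := fun c => by
    simp [m, Finset.le_min'_iff]
  exact ⟨m, (hm a).2 ⟨hab, haU⟩, ((hm m).1 le_rfl).1, fun l hl => (hm l).2 ⟨hLb l hl, hLU l hl⟩,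
    ((hm m).1 le_rfl).2⟩

theorem exists_affine_minorant_of_abs_sub_le_two (w : ℤ → ℝ) {s t : ℤ} (hst : |s - t| ≤ 2)
    (hmid : |s - t| = 2 → w s + w t ≤ 2 * w ((s + t) / 2)) :
    ∃ α β : ℝ, (∀ d : ℤ, |2 * d - (s + t)| ≤ 1 → α + β * d ≤ w d) ∧
      w s + w t ≤ 2 * α + β * (s + t) := by
  rw [abs_le] at hst
  by_cases hfar : |s - t| = 2
  · refine ⟨w ((s + t) / 2), 0, fun d hd => ?_, by simpa using hmid hfar⟩
    have hd : d = (s + t) / 2 := by rw [abs_le] at hd; rw [abs_eq (by norm_num)] at hfar; omega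
    simp [hd]
  · -- on the two rounding points `s` and `t` every function is affine
    have hinterp : w s + (w t - w s) / (t - s) * (t - s) = w t := by
      rcases eq_or_ne s t with rfl | hne
      · simp
      · rw [div_mul_cancel₀ _ (sub_ne_zero.mpr (by exact_mod_cast hne.symm))]; ring
    refine ⟨w s - (w t - w s) / (t - s) * s, (w t - w s) / (t - s), fun d hd => ?_, ?_⟩
    · have hd : d = s ∨ d = t := by rw [abs_eq (by norm_num)] at hfar; rw [abs_le] at hd; omega
      rcases hd with rfl | rfl <;> linarith
    · linarith

theorem exists_affine_minorant_min_mul (a b : ℤ) {s t : ℤ} (hs : |s| ≤ 1) (ht : |t| ≤ 1) :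
    ∃ α β : ℝ, (∀ d : ℤ, |2 * d - (s + t)| ≤ 1 → α + β * d ≤ (min (a * d) (b * d) : ℤ)) ∧
      ((min (a * s) (b * s) : ℤ) : ℝ) + (min (a * t) (b * t) : ℤ) ≤ 2 * α + β * (s + t) := by
  rw [abs_le] at hs ht
  refine exists_affine_minorant_of_abs_sub_le_two _ (by rw [abs_le]; omega) fun hst => ?_
  -- `{1, -1}` is the only far-apart pair, and `d ↦ min (a * d) (b * d)` is concave
  obtain rfl : t = -s := by rw [abs_eq (by norm_num)] at hst; omega
  simp only [add_neg_cancel, Int.zero_ediv, mul_zero, min_self, Int.cast_zero, mul_neg]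
  exact_mod_cast (by omega : min (a * s) (b * s) + min (-(a * s)) (-(b * s)) ≤ 0)

section

variable {n : ℕ}

theorem abs_two_mul_sub_le_one_of_mem_intNbhd {X Y z : Fin n → ℤ}
    (hz : z ∈ intNbhd (fun i => ((X i + Y i : ℤ) : ℝ) / 2)) (i : Fin n) :
    |2 * z i - (X i + Y i)| ≤ 1 := by
  have hlt : |((2 * z i - (X i + Y i) : ℤ) : ℝ)| < 2 := by
    have := hz i
    rw [abs_lt] at this ⊢
    push_cast at this ⊢
    constructor <;> linarith
  have hlt' : |2 * z i - (X i + Y i)| < 2 := by exact_mod_cast hlt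
  rw [abs_lt] at hlt'
  rw [abs_le]
  omega

theorem affine_le_localConvexExt (f : (Fin n → ℤ) → EReal) (u : Fin n → ℝ) (x : Fin n → ℤ)
    (c : ℝ) (β : Fin n → ℝ)
    (h : ∀ z ∈ intNbhd u, ((c + ∑ i, β i * ((z i - x i : ℤ) : ℝ) : ℝ) : EReal) ≤ f z) :
    ((c + ∑ i, β i * (u i - x i) : ℝ) : EReal) ≤ localConvexExt f u := by
  refine le_sInf ?_
  rintro _ ⟨t, lam, hN, hlam, hsum, hmean, rfl⟩
  have hcomb : c + ∑ i, β i * (u i - x i)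
      = ∑ z ∈ t, lam z * (c + ∑ i, β i * ((z i - x i : ℤ) : ℝ)) := by
    have hmean' : ∀ i, ∑ z ∈ t, lam z * ((z i - x i : ℤ) : ℝ) = u i - x i := fun i => by
      simp only [Int.cast_sub, mul_sub, Finset.sum_sub_distrib, hmean, ← Finset.sum_mul, hsum,
        one_mul]
    simp only [mul_add, Finset.sum_add_distrib, ← Finset.sum_mul, hsum, one_mul, Finset.mul_sum]
    rw [Finset.sum_comm]
    simp only [mul_left_comm _ (β _), ← Finset.mul_sum, hmean']
  rw [hcomb, EReal.coe_finset_sum]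
  refine Finset.sum_le_sum fun z hz => ?_
  rw [EReal.coe_mul]
  exact mul_le_mul_of_nonneg_left (h z (hN z hz)) (EReal.coe_nonneg.mpr (hlam z hz))

theorem add_le_add_of_affine_le_of_midpoint (f : (Fin n → ℤ) → EReal) {X Y : Fin n → ℤ}
    (hmid : localConvexExt f (fun i => ((X i + Y i : ℤ) : ℝ) / 2) ≤ (f X + f Y) / 2)
    (x : Fin n → ℤ) (c : ℝ) (β : Fin n → ℝ)
    (h : ∀ z, (∀ i, |2 * z i - (X i + Y i)| ≤ 1) →
      ((c + ∑ i, β i * ((z i - x i : ℤ) : ℝ) : ℝ) : EReal) ≤ f z) :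
    (((c + ∑ i, β i * ((X i - x i : ℤ) : ℝ)) + (c + ∑ i, β i * ((Y i - x i : ℤ) : ℝ)) : ℝ)
      : EReal) ≤ f X + f Y := by
  have hle := (affine_le_localConvexExt f _ x c β fun z hz =>
    h z (abs_two_mul_sub_le_one_of_mem_intNbhd hz)).trans hmid
  rw [EReal.le_div_iff_mul_le (by norm_num) (by decide),
    show (2 : EReal) = ((2 : ℝ) : EReal) from rfl, ← EReal.coe_mul] at hle
  convert hle using 2
  simp only [add_mul, Finset.sum_mul, add_add_add_comm, ← Finset.sum_add_distrib]
  congr 1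
  · ring
  · exact Finset.sum_congr rfl fun i _ => by push_cast; ring

end

theorem IntegrallyConvexFn.subgradient_of_local {n : ℕ} {f : (Fin n → ℤ) → EReal}
    (hf : IntegrallyConvexFn f) {x : Fin n → ℤ} {fx : ℝ} (hfx : f x = fx) (q : Fin n → ℝ)
    (hloc : ∀ y, (∀ i, |y i - x i| ≤ 1) →
      ((∑ i, q i * ((y i - x i : ℤ) : ℝ) : ℝ) : EReal) + f x ≤ f y)
    (y : Fin n → ℤ) : ((∑ i, q i * ((y i - x i : ℤ) : ℝ) : ℝ) : EReal) + f x ≤ f y := by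
  suffices h : ∀ N : ℕ, ∀ y, (∀ i, |y i - x i| ≤ N + 1) →
      ((∑ i, q i * ((y i - x i : ℤ) : ℝ) : ℝ) : EReal) + f x ≤ f y from
    h (∑ i, (y i - x i).natAbs) y fun i => by
      have := Finset.single_le_sum (fun j _ => (y j - x j).natAbs.zero_le) (Finset.mem_univ i)
      rw [Int.abs_eq_natAbs]
      omega
  intro N
  induction N with
  | zero => exact fun y hy => hloc y (by simpa using hy)
  | succ N ih =>
    intro y hy
    by_cases hfar : ∃ i, 2 ≤ |x i - y i|
    · -- the rounding points of the midpoint of `x` and `y` are strictly closer to `x`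
      have hmid := add_le_add_of_affine_le_of_midpoint f (hf.2 x y hfar) x fx q fun z hz => by
        rw [add_comm, EReal.coe_add, ← hfx]
        refine ih z fun i => ?_
        have := hz i
        have := hy i
        rw [abs_le] at *
        push_cast at *
        omega
      simp only [sub_self, Int.cast_zero, mul_zero, Finset.sum_const_zero, add_zero] at hmid
      rw [hfx] at hmid ⊢
      generalize f y = v at hmid ⊢
      induction v using EReal.rec with
      | bot => simp at hmid
      | top => exact le_top
      | coe v =>
        rw [← EReal.coe_add, EReal.coe_le_coe_iff] at hmid ⊢
        linarith
    · simp only [not_exists, not_le] at hfar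
      refine hloc y fun i => ?_
      have := hfar i
      rw [abs_lt] at this
      rw [abs_le]
      omega

section MinPairing

variable {n : ℕ}

/-- `minPairing lo hi d` is the least value of `∑ i, q i * d i` over integer vectors `q` with
`lo ≤ q ≤ hi`. -/
def minPairing (lo hi d : Fin n → ℤ) : ℤ :=
  ∑ i, min (lo i * d i) (hi i * d i)

theorem minPairing_self (q d : Fin n → ℤ) : minPairing q q d = ∑ i, q i * d i := by
  simp [minPairing]

theorem minPairing_update (lo hi d : Fin n → ℤ) (κ : Fin n) (t : ℤ) :
    minPairing (Function.update lo κ t) (Function.update hi κ t) d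
      = minPairing lo hi d - min (lo κ * d κ) (hi κ * d κ) + t * d κ := by
  classical
  simp only [minPairing, ← Finset.add_sum_erase _ _ (Finset.mem_univ κ)]
  rw [Finset.sum_congr rfl fun i hmem => by
    rw [Function.update_of_ne (Finset.ne_of_mem_erase hmem),
      Function.update_of_ne (Finset.ne_of_mem_erase hmem)]]
  simp only [Function.update_self, min_self]
  ring

theorem minPairing_floor_ceil_le (p : Fin n → ℝ) (d : Fin n → ℤ) :
    (minPairing (fun i => ⌊p i⌋) (fun i => ⌈p i⌉) d : ℝ) ≤ ∑ i, p i * d i := by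
  rw [minPairing, Int.cast_sum]
  refine Finset.sum_le_sum fun i _ => ?_
  rcases le_total 0 (d i) with hd | hd
  · exact (Int.cast_le.mpr (min_le_left _ _)).trans
      (by push_cast; exact mul_le_mul_of_nonneg_right (Int.floor_le _) (by exact_mod_cast hd))
  · exact (Int.cast_le.mpr (min_le_right _ _)).trans
      (by push_cast; exact mul_le_mul_of_nonpos_right (Int.le_ceil _) (by exact_mod_cast hd))

end MinPairing

section Elimination

variable {n : ℕ} {f : (Fin n → ℤ) → EReal} {F : (Fin n → ℤ) → ℤ} {x : Fin n → ℤ}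

theorem IntegrallyConvexFn.minPairing_add_minPairing_le (hf : IntegrallyConvexFn f)
    (hF : ∀ z, f z ≠ ⊤ → f z = ((F z : ℝ) : EReal)) (hx : f x ≠ ⊤) (lo hi : Fin n → ℤ)
    {y y' : Fin n → ℤ} (hy : ∀ i, |y i - x i| ≤ 1) (hy' : ∀ i, |y' i - x i| ≤ 1)
    (hyy' : ∃ i, 2 ≤ |y i - y' i|) (hfy : f y ≠ ⊤) (hfy' : f y' ≠ ⊤)
    (hR : ∀ z, (∀ i, |2 * z i - (y i + y' i)| ≤ 1) →
      ((minPairing lo hi (z - x) : ℝ) : EReal) + f x ≤ f z) :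
    minPairing lo hi (y - x) + minPairing lo hi (y' - x) + 2 * F x ≤ F y + F y' := by
  have hcast : ∀ d, (minPairing lo hi d : ℝ) = ∑ i, ((min (lo i * d i) (hi i * d i) : ℤ) : ℝ) :=
    fun d => by rw [minPairing, Int.cast_sum]
  choose α β hα hαβ using fun i => exists_affine_minorant_min_mul (lo i) (hi i) (hy i) (hy' i)
  have hℓ := add_le_add_of_affine_le_of_midpoint f (hf.2 y y' hyy') x (F x + ∑ i, α i) β
    fun z hz => by
      have hle := Finset.sum_le_sum fun i (_ : i ∈ Finset.univ) =>
        hα i (z i - x i) (by have := hz i; rw [abs_le] at this ⊢; omega)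
      rw [Finset.sum_add_distrib] at hle
      refine le_trans ?_ (hR z hz)
      rw [hF x hx, ← EReal.coe_add, EReal.coe_le_coe_iff, hcast]
      simp only [Pi.sub_apply]
      linarith
  rw [hF y hfy, hF y' hfy', ← EReal.coe_add, EReal.coe_le_coe_iff] at hℓ
  have hends := Finset.sum_le_sum fun i (_ : i ∈ Finset.univ) => hαβ i
  simp only [Finset.sum_add_distrib, mul_add, ← Finset.mul_sum] at hends
  suffices (minPairing lo hi (y - x) : ℝ) + minPairing lo hi (y' - x) + 2 * F x ≤ F y + F y' by
    exact_mod_cast this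
  simp only [hcast, Pi.sub_apply]
  push_cast at hℓ hends ⊢
  linarith

variable (f x) in
/-- The box `[lo, hi]` satisfies the local subgradient inequalities pointwise: for each `y`
in the unit box around `x` some `q` in `[lo, hi]`, depending on `y`, works. -/
def BoxFeasibleAt (lo hi : Fin n → ℤ) : Prop :=
  ∀ y, (∀ i, |y i - x i| ≤ 1) → ((minPairing lo hi (y - x) : ℝ) : EReal) + f x ≤ f y

theorem BoxFeasibleAt.le_of_ne_top (hF : ∀ z, f z ≠ ⊤ → f z = ((F z : ℝ) : EReal))
    (hx : f x ≠ ⊤) {lo hi : Fin n → ℤ} (h : BoxFeasibleAt f x lo hi) {y : Fin n → ℤ}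
    (hy : ∀ i, |y i - x i| ≤ 1) (hfy : f y ≠ ⊤) : minPairing lo hi (y - x) + F x ≤ F y := by
  have := h y hy
  rw [hF x hx, hF y hfy, ← EReal.coe_add, EReal.coe_le_coe_iff] at this
  exact_mod_cast this

theorem BoxFeasibleAt.add_le_of_opposite (hf : IntegrallyConvexFn f)
    (hF : ∀ z, f z ≠ ⊤ → f z = ((F z : ℝ) : EReal)) (hx : f x ≠ ⊤) {lo hi : Fin n → ℤ}
    (h : BoxFeasibleAt f x lo hi) {κ : Fin n} (hκ : lo κ ≤ hi κ) {y y' : Fin n → ℤ}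
    (hy : ∀ i, |y i - x i| ≤ 1) (hy' : ∀ i, |y' i - x i| ≤ 1)
    (hyκ : y κ - x κ = 1) (hy'κ : y' κ - x κ = -1) (hfy : f y ≠ ⊤) (hfy' : f y' ≠ ⊤) :
    minPairing lo hi (y - x) + minPairing lo hi (y' - x) + (hi κ - lo κ) + 2 * F x
      ≤ F y + F y' := by
  -- freezing coordinate `κ` does not affect the rounding points, all of which have `z κ = x κ`
  have key := hf.minPairing_add_minPairing_le hF hx (Function.update lo κ 0)
    (Function.update hi κ 0) hy hy' ⟨κ, by rw [show y κ - y' κ = 2 by omega]; norm_num⟩ hfy hfy'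
    fun z hz => by
      have hzκ : z κ - x κ = 0 := by have := hz κ; rw [abs_le] at this; omega
      have hz1 : ∀ i, |z i - x i| ≤ 1 := fun i => by
        have := hz i; have := hy i; have := hy' i
        rw [abs_le] at *; omega
      simpa [minPairing_update, hzκ] using h z hz1
  simp only [minPairing_update, Pi.sub_apply, hyκ, hy'κ, mul_one, mul_neg, min_eq_left hκ,
    min_neg_neg, max_eq_right hκ, add_zero] at key
  linarith

theorem BoxFeasibleAt.update (hF : ∀ z, f z ≠ ⊤ → f z = ((F z : ℝ) : EReal)) (hx : f x ≠ ⊤)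
    {lo hi : Fin n → ℤ} (h : BoxFeasibleAt f x lo hi) {κ : Fin n} (hκ : lo κ ≤ hi κ) {t : ℤ}
    (hupper : ∀ y, (∀ i, |y i - x i| ≤ 1) → f y ≠ ⊤ → y κ - x κ = 1 →
      t ≤ F y - F x - minPairing lo hi (y - x) + lo κ)
    (hlower : ∀ y, (∀ i, |y i - x i| ≤ 1) → f y ≠ ⊤ → y κ - x κ = -1 →
      minPairing lo hi (y - x) + hi κ + F x - F y ≤ t) :
    BoxFeasibleAt f x (Function.update lo κ t) (Function.update hi κ t) := by
  intro y hy
  by_cases hfy : f y = ⊤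
  · rw [hfy]; exact le_top
  rw [hF x hx, hF y hfy, ← EReal.coe_add, EReal.coe_le_coe_iff, minPairing_update]
  suffices minPairing lo hi (y - x) - min (lo κ * (y κ - x κ)) (hi κ * (y κ - x κ))
      + t * (y κ - x κ) + F x ≤ F y by exact_mod_cast this
  have hyκ := hy κ
  rw [abs_le] at hyκ
  rcases (by omega : y κ - x κ = 1 ∨ y κ - x κ = 0 ∨ y κ - x κ = -1) with hyκ | hyκ | hyκ
  · have := hupper y hy hfy hyκ
    simp only [hyκ, mul_one, min_eq_left hκ]
    omega
  · simpa [hyκ] using h.le_of_ne_top hF hx hy hfy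
  · have := hlower y hy hfy hyκ
    simp only [hyκ, mul_neg, mul_one, min_neg_neg, max_eq_right hκ]
    omega

theorem BoxFeasibleAt.exists_update (hf : IntegrallyConvexFn f)
    (hF : ∀ z, f z ≠ ⊤ → f z = ((F z : ℝ) : EReal)) (hx : f x ≠ ⊤) {lo hi : Fin n → ℤ}
    (h : BoxFeasibleAt f x lo hi) {κ : Fin n} (hκ : lo κ ≤ hi κ) :
    ∃ t, lo κ ≤ t ∧ t ≤ hi κ ∧
      BoxFeasibleAt f x (Function.update lo κ t) (Function.update hi κ t) := by
  let near : ℤ → Set (Fin n → ℤ) := fun s =>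
    {y | (∀ i, |y i - x i| ≤ 1) ∧ f y ≠ ⊤ ∧ y κ - x κ = s}
  have hnear : (near 1).Finite := by
    refine (Set.Finite.pi (t := fun i => Set.Icc (x i - 1) (x i + 1))
      fun i => Set.finite_Icc _ _).subset fun y hy i _ => ?_
    have := hy.1 i
    rw [abs_le] at this
    exact ⟨by omega, by omega⟩
  let upper := fun y => F y - F x - minPairing lo hi (y - x) + lo κ
  let lower := fun y => minPairing lo hi (y - x) + hi κ + F x - F y
  obtain ⟨t, hlot, hthi, hlower, hupper⟩ :=
    exists_mem_Icc_between (L := lower '' near (-1)) (hnear.image upper) hκ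
    (by
      rintro _ ⟨y, ⟨hy, hfy, -⟩, rfl⟩
      have := h.le_of_ne_top hF hx hy hfy
      dsimp only [upper]
      omega)
    (by
      rintro _ ⟨y, ⟨hy, hfy, -⟩, rfl⟩
      have := h.le_of_ne_top hF hx hy hfy
      dsimp only [lower]
      omega)
    (by
      rintro _ ⟨y', ⟨hy', hfy', hy'κ⟩, rfl⟩ _ ⟨y, ⟨hy, hfy, hyκ⟩, rfl⟩
      have := h.add_le_of_opposite hf hF hx hκ hy hy' hyκ hy'κ hfy hfy'
      dsimp only [upper, lower]
      omega)
  exact ⟨t, hlot, hthi, h.update hF hx hκ (fun y hy hfy hyκ => hupper _ ⟨y, ⟨hy, hfy, hyκ⟩, rfl⟩)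
    fun y hy hfy hyκ => hlower _ ⟨y, ⟨hy, hfy, hyκ⟩, rfl⟩⟩

theorem boxFeasibleAt_floor_ceil {p : Fin n → ℝ}
    (hp : ∀ y, (∀ i, |y i - x i| ≤ 1) →
      ((∑ i, p i * ((y i - x i : ℤ) : ℝ) : ℝ) : EReal) + f x ≤ f y) :
    BoxFeasibleAt f x (fun i => ⌊p i⌋) (fun i => ⌈p i⌉) := fun y hy =>
  (add_le_add_left (EReal.coe_le_coe_iff.mpr (minPairing_floor_ceil_le p (y - x))) _).trans
    (hp y hy)

theorem BoxFeasibleAt.subgradient_of_self {q : Fin n → ℤ} (h : BoxFeasibleAt f x q q) :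
    ∀ y, (∀ i, |y i - x i| ≤ 1) →
      ((∑ i, (q i : ℝ) * ((y i - x i : ℤ) : ℝ) : ℝ) : EReal) + f x ≤ f y := fun y hy => by
  simpa [minPairing_self] using h y hy

theorem BoxFeasibleAt.exists_point (hf : IntegrallyConvexFn f)
    (hF : ∀ z, f z ≠ ⊤ → f z = ((F z : ℝ) : EReal)) (hx : f x ≠ ⊤) {lo hi : Fin n → ℤ}
    (h : BoxFeasibleAt f x lo hi) (hle : lo ≤ hi) :
    ∃ q, lo ≤ q ∧ q ≤ hi ∧ BoxFeasibleAt f x q q := by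
  classical
  suffices H : ∀ s : Finset (Fin n), ∃ lo' hi', lo ≤ lo' ∧ lo' ≤ hi' ∧ hi' ≤ hi ∧
      (∀ i ∈ s, lo' i = hi' i) ∧ BoxFeasibleAt f x lo' hi' by
    obtain ⟨q, hi', hlo, -, hhi, heq, hq⟩ := H Finset.univ
    obtain rfl : q = hi' := funext fun i => heq i (Finset.mem_univ i)
    exact ⟨q, hlo, hhi, hq⟩
  intro s
  induction s using Finset.induction_on with
  | empty => exact ⟨lo, hi, le_rfl, hle, le_rfl, by simp, h⟩
  | insert κ s _ ih =>
    obtain ⟨lo', hi', hlo, hle', hhi, heq, h'⟩ := ih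
    obtain ⟨t, hlot, hthi, ht⟩ := h'.exists_update hf hF hx (hle' κ)
    refine ⟨Function.update lo' κ t, Function.update hi' κ t, ?_, ?_, ?_, fun i hi => ?_, ht⟩
    · exact le_update_iff.mpr ⟨(hlo κ).trans hlot, fun j _ => hlo j⟩
    · exact update_le_update_iff.mpr ⟨le_rfl, fun j _ => hle' j⟩
    · exact update_le_iff.mpr ⟨hthi.trans (hhi κ), fun j _ => hhi j⟩
    · rcases eq_or_ne i κ with rfl | hiκ
      · simp
      · simp [hiκ, heq i ((Finset.mem_insert.mp hi).resolve_left hiκ)]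

end Elimination

/-- **Box rounding of subgradients.**  If f : ℤⁿ → ℤ ∪ {+∞} is an
integer-valued integrally convex function, x ∈ dom f, and p ∈ ℝⁿ is a
subgradient of f at x, then some integer vector q with
⌊pᵢ⌋ ≤ qᵢ ≤ ⌈pᵢ⌉ for all i is also a subgradient of f at x. -/
theorem integral_subgradient_box_rounding (n : ℕ)
    (f : (Fin n → ℤ) → EReal)
    (hZ : ∀ z, f z = ⊤ ∨ ∃ m : ℤ, f z = ((m : ℝ) : EReal))
    (hf : IntegrallyConvexFn f) (x : Fin n → ℤ) (hx : f x ≠ ⊤)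
    (p : Fin n → ℝ)
    (hp : ∀ y : Fin n → ℤ,
      (((∑ i, p i * ((y i - x i : ℤ) : ℝ)) : ℝ) : EReal) + f x ≤ f y) :
    ∃ q : Fin n → ℤ, (∀ i, ⌊p i⌋ ≤ q i ∧ q i ≤ ⌈p i⌉) ∧
      ∀ y : Fin n → ℤ,
        (((∑ i, (q i : ℝ) * ((y i - x i : ℤ) : ℝ)) : ℝ) : EReal) + f x ≤ f y := by
  have hval : ∀ z, ∃ m : ℤ, f z ≠ ⊤ → f z = ((m : ℝ) : EReal) := fun z =>
    (hZ z).elim (fun h => ⟨0, fun h' => absurd h h'⟩) fun ⟨m, hm⟩ => ⟨m, fun _ => hm⟩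
  choose F hF using hval
  obtain ⟨q, hlo, hhi, hq⟩ := (boxFeasibleAt_floor_ceil fun y _ => hp y).exists_point hf hF hx
    fun i => Int.floor_le_ceil (p i)
  exact ⟨q, fun i => ⟨hlo i, hhi i⟩, hf.subgradient_of_local (hF x hx) _ hq.subgradient_of_self⟩
end

section
/- Failure of discrete Fenchel duality beyond separable functions (dimension 2): let f(x₁,x₂) = |x₁+x₂-1| and g(x₁,x₂) = 1 - |x₁-x₂| for (x₁,x₂) ∈ ℤ². Then min{f(x) - g(x) : x ∈ ℤ²} = 0 while max{g°(p) - f•(p) : p ∈ ℤ²} = -1, where f•(p) = sup{⟨p,x⟩ - f(x) : x ∈ ℤ²} and g°(p) = inf{⟨p,x⟩ - g(x) : x ∈ ℤ²}; in particular the Fenchel min-max formula fails for this pair. -/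
private lemma fdf_sup_top {F : (Fin 2 → ℤ) → ℤ}
    (h : ∀ n : ℤ, ∃ x : Fin 2 → ℤ, n ≤ F x) :
    (⨆ x : Fin 2 → ℤ, (((F x : ℝ)) : EReal)) = ⊤ := by
  rw [iSup_eq_top]
  intro b hb
  induction b using EReal.rec with
  | bot =>
      obtain ⟨x, _⟩ := h 0
      exact ⟨x, bot_lt_iff_ne_bot.2 (by simp)⟩
  | coe r =>
      obtain ⟨n, hn⟩ := exists_int_gt r
      obtain ⟨x, hx⟩ := h n
      refine ⟨x, ?_⟩
      rw [EReal.coe_lt_coe_iff]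
      calc r < (n : ℝ) := hn
        _ ≤ (F x : ℝ) := by exact_mod_cast hx
  | top => exact absurd hb (lt_irrefl _)

private lemma fdf_inf_bot {F : (Fin 2 → ℤ) → ℤ}
    (h : ∀ n : ℤ, ∃ x : Fin 2 → ℤ, F x ≤ n) :
    (⨅ x : Fin 2 → ℤ, (((F x : ℝ)) : EReal)) = ⊥ := by
  rw [iInf_eq_bot]
  intro b hb
  induction b using EReal.rec with
  | bot => exact absurd hb (lt_irrefl _)
  | coe r =>
      obtain ⟨n, hn⟩ := exists_int_lt r
      obtain ⟨x, hx⟩ := h n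
      refine ⟨x, ?_⟩
      rw [EReal.coe_lt_coe_iff]
      calc (F x : ℝ) ≤ (n : ℝ) := by exact_mod_cast hx
        _ < r := hn
  | top =>
      obtain ⟨x, _⟩ := h 0
      exact ⟨x, lt_top_iff_ne_top.2 (by simp)⟩

private lemma fdf_zero_case (p : Fin 2 → ℤ) (h0 : p 0 = 0) (h1 : p 1 = 0) :
    (⨅ x : Fin 2 → ℤ,
        ((((p 0 * x 0 + p 1 * x 1 - (1 - |x 0 - x 1|) : ℤ) : ℝ)) : EReal)) -
      (⨆ x : Fin 2 → ℤ,
        ((((p 0 * x 0 + p 1 * x 1 - |x 0 + x 1 - 1| : ℤ) : ℝ)) : EReal))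
    = (((-1 : ℝ)) : EReal) := by
  have hinf : (⨅ x : Fin 2 → ℤ,
      ((((p 0 * x 0 + p 1 * x 1 - (1 - |x 0 - x 1|) : ℤ) : ℝ)) : EReal))
      = (((-1 : ℝ)) : EReal) := by
    apply le_antisymm
    · refine iInf_le_of_le ![0, 0] ?_
      simp [h0, h1]
    · refine le_iInf fun x => ?_
      rw [EReal.coe_le_coe_iff]
      push_cast [h0, h1]
      have := abs_nonneg ((x 0 : ℝ) - (x 1 : ℝ))
      linarith
  have hsup : (⨆ x : Fin 2 → ℤ,
      ((((p 0 * x 0 + p 1 * x 1 - |x 0 + x 1 - 1| : ℤ) : ℝ)) : EReal))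
      = (((0 : ℝ)) : EReal) := by
    apply le_antisymm
    · refine iSup_le fun x => ?_
      rw [EReal.coe_le_coe_iff]
      push_cast [h0, h1]
      have := abs_nonneg ((x 0 : ℝ) + (x 1 : ℝ) - 1)
      linarith
    · refine le_iSup_of_le ![1, 0] ?_
      simp [h0, h1]
  rw [hinf, hsup, ← EReal.coe_sub]
  norm_num

/-- **Failure of discrete Fenchel duality for an M♮-convex / L-concave pair.**
For f(x₁,x₂) = |x₁+x₂−1| and g(x₁,x₂) = 1 − |x₁−x₂| on ℤ²,
min{f − g} = 0 whereas max{g° − f•} = −1. -/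
theorem fenchel_duality_failure_example :
    IsLeast {v : ℤ | ∃ x : Fin 2 → ℤ,
        v = |x 0 + x 1 - 1| - (1 - |x 0 - x 1|)} 0 ∧
    IsGreatest {v : EReal | ∃ p : Fin 2 → ℤ,
        v = (⨅ x : Fin 2 → ℤ,
              ((((p 0 * x 0 + p 1 * x 1 - (1 - |x 0 - x 1|) : ℤ) : ℝ)) : EReal)) -
            (⨆ x : Fin 2 → ℤ,
              ((((p 0 * x 0 + p 1 * x 1 - |x 0 + x 1 - 1| : ℤ) : ℝ)) : EReal))}
      (((-1 : ℝ)) : EReal) := by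
  constructor
  · constructor
    · exact ⟨![1, 0], by norm_num⟩
    · rintro v ⟨x, rfl⟩
      rcases abs_cases (x 0 + x 1 - 1) with h | h <;>
        rcases abs_cases (x 0 - x 1) with h' | h' <;> omega
  · constructor
    · refine ⟨fun _ => 0, ?_⟩
      beta_reduce
      exact (fdf_zero_case (fun _ => 0) rfl rfl).symm
    · rintro v ⟨p, rfl⟩
      by_cases hp : p 0 = 0 ∧ p 1 = 0
      · rw [fdf_zero_case p hp.1 hp.2]
      · by_cases hs : p 0 + p 1 = 0
        · -- p 0 ≠ 0, iSup = ⊤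
          have hp0 : p 0 ≠ 0 := by
            intro h; exact hp ⟨h, by omega⟩
          have hsup : (⨆ x : Fin 2 → ℤ,
              ((((p 0 * x 0 + p 1 * x 1 - |x 0 + x 1 - 1| : ℤ) : ℝ)) : EReal)) = ⊤ := by
            apply fdf_sup_top
            intro n
            refine ⟨![p 0 * (|n| + 1), -(p 0 * (|n| + 1))], ?_⟩
            have h0 : (![p 0 * (|n| + 1), -(p 0 * (|n| + 1))] : Fin 2 → ℤ) 0
                = p 0 * (|n| + 1) := rfl
            have h1 : (![p 0 * (|n| + 1), -(p 0 * (|n| + 1))] : Fin 2 → ℤ) 1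
                = -(p 0 * (|n| + 1)) := rfl
            rw [h0, h1]
            have hp1 : p 1 = -(p 0) := by omega
            have habs : |p 0 * (|n| + 1) + -(p 0 * (|n| + 1)) - 1| = 1 := by
              norm_num
            rw [habs, hp1]
            have hsq : 1 ≤ p 0 * p 0 := by
              rcases lt_or_gt_of_ne hp0 with h | h <;> nlinarith
            nlinarith [abs_nonneg n, le_abs_self n]
          rw [hsup, EReal.sub_top]
          exact bot_le
        · -- iInf = ⊥
          have hinf : (⨅ x : Fin 2 → ℤ,
              ((((p 0 * x 0 + p 1 * x 1 - (1 - |x 0 - x 1|) : ℤ) : ℝ)) : EReal)) = ⊥ := by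
            apply fdf_inf_bot
            intro n
            refine ⟨![-(p 0 + p 1) * (|n| + 1), -(p 0 + p 1) * (|n| + 1)], ?_⟩
            have h0 : (![-(p 0 + p 1) * (|n| + 1), -(p 0 + p 1) * (|n| + 1)] : Fin 2 → ℤ) 0
                = -(p 0 + p 1) * (|n| + 1) := rfl
            have h1 : (![-(p 0 + p 1) * (|n| + 1), -(p 0 + p 1) * (|n| + 1)] : Fin 2 → ℤ) 1
                = -(p 0 + p 1) * (|n| + 1) := rfl
            rw [h0, h1]
            simp only [sub_self, abs_zero]
            have hsq : 1 ≤ (p 0 + p 1) * (p 0 + p 1) := by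
              rcases lt_or_gt_of_ne hs with h | h <;> nlinarith
            nlinarith [abs_nonneg n, neg_abs_le n]
          rw [hinf, EReal.bot_sub]
          exact bot_le
end

section
/- Failure of discrete Fenchel duality by dual integrality gap: let f(x₁,x₂) = max(0, x₁+x₂) and g(x₁,x₂) = min(x₁,x₂) on ℤ². Then min{f(x) - g(x) : x ∈ ℤ²} = 0, while g°(p) - f•(p) = -∞ for every p ∈ ℤ² (so the supremum over integer p is -∞), where f•(p) = sup{⟨p,x⟩ - f(x) : x ∈ ℤ²} and g°(p) = inf{⟨p,x⟩ - g(x) : x ∈ ℤ²}. -/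
lemma mySupTop (F : (Fin 2 → ℤ) → ℤ) (h : ∀ n : ℤ, ∃ x, n ≤ F x) :
    (⨆ x : Fin 2 → ℤ, (((F x : ℤ) : ℝ) : EReal)) = ⊤ := by
  rw [iSup_eq_top]
  intro b hb
  induction b using EReal.rec with
  | bot =>
      obtain ⟨x, _⟩ := h 0
      exact ⟨x, EReal.bot_lt_coe _⟩
  | coe r =>
      obtain ⟨n, hn⟩ := exists_int_gt r
      obtain ⟨x, hx⟩ := h n
      refine ⟨x, ?_⟩
      have : r < ((F x : ℤ) : ℝ) := lt_of_lt_of_le hn (by exact_mod_cast hx)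
      exact_mod_cast this
  | top => exact absurd hb (lt_irrefl _)

lemma myInfBot (F : (Fin 2 → ℤ) → ℤ) (h : ∀ n : ℤ, ∃ x, F x ≤ n) :
    (⨅ x : Fin 2 → ℤ, (((F x : ℤ) : ℝ) : EReal)) = ⊥ := by
  rw [iInf_eq_bot]
  intro b hb
  induction b using EReal.rec with
  | bot => exact absurd hb (lt_irrefl _)
  | coe r =>
      obtain ⟨n, hn⟩ := exists_int_lt r
      obtain ⟨x, hx⟩ := h n
      refine ⟨x, ?_⟩
      have : ((F x : ℤ) : ℝ) < r := lt_of_le_of_lt (by exact_mod_cast hx) hn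
      exact_mod_cast this
  | top =>
      obtain ⟨x, _⟩ := h 0
      exact ⟨x, EReal.coe_lt_top _⟩

/-- **Failure of discrete Fenchel duality by dual integrality gap.**
For f(x₁,x₂) = max(0, x₁+x₂) and g(x₁,x₂) = min(x₁,x₂) on ℤ²,
min{f − g} = 0 while g°(p) − f•(p) = −∞ for every integer vector p. -/
theorem fenchel_duality_dual_gap_example :
    IsLeast {v : ℤ | ∃ x : Fin 2 → ℤ,
        v = max 0 (x 0 + x 1) - min (x 0) (x 1)} 0 ∧
    ∀ p : Fin 2 → ℤ,
      (⨅ x : Fin 2 → ℤ,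
          ((((p 0 * x 0 + p 1 * x 1 - min (x 0) (x 1) : ℤ) : ℝ)) : EReal)) -
        (⨆ x : Fin 2 → ℤ,
          ((((p 0 * x 0 + p 1 * x 1 - max 0 (x 0 + x 1) : ℤ) : ℝ)) : EReal)) = ⊥ := by
  constructor
  · constructor
    · exact ⟨fun _ => 0, by simp⟩
    · rintro v ⟨x, rfl⟩
      omega
  · intro p
    set a := p 0 with ha
    set b := p 1 with hb
    by_cases hS : (a = 0 ∧ b = 0) ∨ (a = 1 ∧ b = 1)
    · -- infimum is ⊥
      have hinf : (⨅ x : Fin 2 → ℤ,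
          ((((p 0 * x 0 + p 1 * x 1 - min (x 0) (x 1) : ℤ) : ℝ)) : EReal)) = ⊥ := by
        apply myInfBot (fun x => p 0 * x 0 + p 1 * x 1 - min (x 0) (x 1))
        intro n
        rcases hS with ⟨h0, h1⟩ | ⟨h0, h1⟩
        · exact ⟨![-n, -n], by simp [← ha, ← hb, h0, h1]⟩
        · exact ⟨![n, n], by simp [← ha, ← hb, h0, h1]⟩
      rw [hinf, EReal.bot_sub]
    · -- supremum is ⊤
      have hsup : (⨆ x : Fin 2 → ℤ,
          ((((p 0 * x 0 + p 1 * x 1 - max 0 (x 0 + x 1) : ℤ) : ℝ)) : EReal)) = ⊤ := by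
        apply mySupTop (fun x => p 0 * x 0 + p 1 * x 1 - max 0 (x 0 + x 1))
        intro n
        push_neg at hS
        by_cases hab : a = b
        · -- a = b, a ∉ {0,1}
          rcases lt_or_ge a 0 with hlt | hge
          · refine ⟨![-|n|, -|n|], ?_⟩
            simp only [← ha, ← hb, Matrix.cons_val_zero, Matrix.cons_val_one, Matrix.head_cons]
            have h1 : 0 ≤ |n| := abs_nonneg n
            have h2 : n ≤ |n| := le_abs_self n
            have : max 0 (-|n| + -|n|) = 0 := by omega
            rw [this, hab]
            nlinarith
          · have h2a : 2 ≤ a := by omega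
            refine ⟨![|n|, |n|], ?_⟩
            simp only [← ha, ← hb, Matrix.cons_val_zero, Matrix.cons_val_one, Matrix.head_cons]
            have h1 : 0 ≤ |n| := abs_nonneg n
            have h2 : n ≤ |n| := le_abs_self n
            have : max 0 (|n| + |n|) = |n| + |n| := by omega
            rw [this, hab]
            nlinarith
        · refine ⟨![|n| * (a - b), -(|n| * (a - b))], ?_⟩
          simp only [← ha, ← hb, Matrix.cons_val_zero, Matrix.cons_val_one, Matrix.head_cons]
          have h1 : 0 ≤ |n| := abs_nonneg n
          have h2 : n ≤ |n| := le_abs_self n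
          have h3 : 1 ≤ (a - b) ^ 2 := by
            have h := Int.one_le_abs (sub_ne_zero_of_ne hab)
            nlinarith [sq_abs (a - b)]
          have : max 0 (|n| * (a - b) + -(|n| * (a - b))) = 0 := by ring_nf; simp
          rw [this]
          nlinarith
      rw [hsup, EReal.sub_top]
end

section
/- An example with unique non-integral subgradient: let D = {(0,0,0), ±(1,1,0), ±(0,1,1), ±(1,0,1)} ⊆ ℤ³ and define f: ℤ³ → ℤ ∪ {+∞} by f(x) = (x₁+x₂+x₃)/2 for x ∈ D and +∞ otherwise (note the value is an integer on D). Then the subdifferential ∂f(0,0,0) = {p ∈ ℝ³ : f(y) ≥ ⟨p,y⟩ for all y ∈ ℤ³} equals the single point {(1/2, 1/2, 1/2)}; in particular ∂f(0,0,0) ∩ ℤ³ = ∅. -/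
/-!
Outside `D` the function is `+∞`, so `p` is a subgradient at `0` iff `⟨p, y⟩ ≤ (y₁ + y₂ + y₃)/2`
for `y ∈ D`. Since `D = -D`, these inequalities are equalities, and the three vectors
`(1,1,0), (0,1,1), (1,0,1)` span `ℝ³`, so they pin `p` down to `(1/2, 1/2, 1/2)`.
-/

open Finset

theorem forall_coe_le_iff_forall_mem_le {α : Type*} {D : Set α} {f : α → EReal} {h : α → ℝ}
    (hfD : ∀ x ∈ D, f x = h x) (hfD' : ∀ x ∉ D, f x = ⊤) (g : α → ℝ) :
    (∀ y, (g y : EReal) ≤ f y) ↔ ∀ y ∈ D, g y ≤ h y := by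
  refine ⟨fun hg y hy => by simpa [hfD y hy] using hg y, fun hg y => ?_⟩
  by_cases hy : y ∈ D
  · simpa [hfD y hy] using hg y hy
  · simp [hfD' y hy]

theorem sum_mul_eq_of_le_of_neg_le {ι : Type*} [Fintype ι] {p : ι → ℝ} {d : ι → ℤ} {c : ℝ}
    (hd : ∑ i, p i * d i ≤ c) (hnd : ∑ i, p i * (-d) i ≤ -c) : ∑ i, p i * d i = c := by
  simp only [Pi.neg_apply, Int.cast_neg, mul_neg, sum_neg_distrib] at hnd
  linarith

theorem eq_half_of_forall_mem_le {p : Fin 3 → ℝ}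
    (hp : ∀ y ∈ ({![0,0,0], ![1,1,0], ![-1,-1,0], ![0,1,1], ![0,-1,-1], ![1,0,1], ![-1,0,-1]} :
      Set (Fin 3 → ℤ)), ∑ i, p i * y i ≤ ((y 0 + y 1 + y 2 : ℤ) : ℝ) / 2) :
    p = fun _ => 1 / 2 := by
  have eq_of_pm (d : Fin 3 → ℤ) (hd : d ∈ _) (hnd : -d ∈ _) :
      ∑ i, p i * d i = ((d 0 + d 1 + d 2 : ℤ) : ℝ) / 2 :=
    sum_mul_eq_of_le_of_neg_le (hp d hd) (by convert hp (-d) hnd using 1; simp; ring)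
  have h₁ := eq_of_pm ![1,1,0] (by simp) (by simp)
  have h₂ := eq_of_pm ![0,1,1] (by simp) (by simp)
  have h₃ := eq_of_pm ![1,0,1] (by simp) (by simp)
  simp only [Fin.sum_univ_three, Fin.isValue, Matrix.cons_val_zero, Matrix.cons_val_one,
    Matrix.cons_val, Int.cast_one, Int.cast_zero, mul_one, mul_zero, add_zero, zero_add,
    Int.reduceAdd, Int.cast_ofNat, ne_eq, OfNat.ofNat_ne_zero, not_false_eq_true, div_self] at h₁ h₂ h₃
  funext i
  fin_cases i <;> simp <;> linarith

theorem intCast_ne_half (n : ℤ) : (n : ℝ) ≠ 1 / 2 := by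
  intro h
  have : 2 * n = 1 := by exact_mod_cast (by rw [h]; norm_num : (2 * n : ℝ) = 1)
  omega

/-- **A unique non-integral subgradient.**  Let
D = {(0,0,0), ±(1,1,0), ±(0,1,1), ±(1,0,1)} ⊆ ℤ³ and define f by
f(x) = (x₁+x₂+x₃)/2 on D and +∞ elsewhere.  Then
∂f(0,0,0) = {p ∈ ℝ³ : f(y) ≥ ⟨p,y⟩ for all y ∈ ℤ³} = {(1/2,1/2,1/2)};
in particular ∂f(0,0,0) contains no integer vector. -/
theorem unique_nonintegral_subgradient (D : Set (Fin 3 → ℤ))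
    (hD : D = {![0,0,0], ![1,1,0], ![-1,-1,0], ![0,1,1], ![0,-1,-1],
               ![1,0,1], ![-1,0,-1]})
    (f : (Fin 3 → ℤ) → EReal)
    (hfD : ∀ x ∈ D, f x = ((((x 0 + x 1 + x 2 : ℤ) : ℝ) / 2 : ℝ) : EReal))
    (hfD' : ∀ x ∉ D, f x = (⊤ : EReal)) :
    {p : Fin 3 → ℝ | ∀ y : Fin 3 → ℤ,
        (((∑ i, p i * (y i : ℝ)) : ℝ) : EReal) ≤ f y} =
      {fun _ => (1 / 2 : ℝ)} ∧
    ¬ ∃ q : Fin 3 → ℤ, ∀ y : Fin 3 → ℤ,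
        (((∑ i, (q i : ℝ) * (y i : ℝ)) : ℝ) : EReal) ≤ f y := by
  have hsub : {p : Fin 3 → ℝ | ∀ y : Fin 3 → ℤ,
      (((∑ i, p i * (y i : ℝ)) : ℝ) : EReal) ≤ f y} = {fun _ => (1 / 2 : ℝ)} := by
    ext p
    rw [Set.mem_ofPred_eq, forall_coe_le_iff_forall_mem_le hfD hfD', Set.mem_singleton_iff]
    subst hD
    refine ⟨eq_half_of_forall_mem_le, ?_⟩
    rintro rfl y -
    simp only [Fin.sum_univ_three]
    push_cast
    linarith
  refine ⟨hsub, fun ⟨q, hq⟩ => ?_⟩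
  have hq' : (fun i => (q i : ℝ)) ∈ ({fun _ => 1 / 2} : Set (Fin 3 → ℝ)) := hsub ▸ hq
  exact intCast_ne_half (q 0) (congrFun hq' 0)
end
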